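/- arXiv:2205.14488 — 2 statements merged into one kernel-verified Lean document; each statement's English description precedes it below -/
import Mathlib

section
/- Let N ≥ 1, s, ε ∈ ℝ, u₀(x) = N^{-s-ε}(cos(Nx) + cos(2Nx)) on the one-dimensional torus, and let v(t) = e^{tΔ}u₀. Then the spatial mean of v(t)³ equals (3/4) N^{-3s-3ε} e^{-6tN²} for every t ≥ 0. -/
open Real Finset

/-!
Writing `v t x = A cos (N x) + B cos (2 N x)` with `A = N^{-s-ε} e^{-tN²}` and
`B = N^{-s-ε} e^{-4tN²}`, the product-to-sum formulas turn `(v t x)³` into a cosine polynomial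
in the frequencies `0, N, …, 6N`. Every nonzero frequency averages to zero over a period, and the
only resonant term is `3 A² B cos² (N x) cos (2 N x)`, whose constant part is `(3/4) A² B`.
-/

theorem integral_cos_nat_mul_zero_two_pi {m : ℕ} (hm : m ≠ 0) :
    ∫ x in (0 : ℝ)..2 * π, cos (m * x) = 0 := by
  have hm' : (m : ℝ) ≠ 0 := Nat.cast_ne_zero.mpr hm
  rw [intervalIntegral.integral_comp_mul_left (fun x => cos x) hm', integral_cos,
    show (m : ℝ) * (2 * π) = (2 * m : ℕ) * π by push_cast; ring, sin_nat_mul_pi]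
  simp

theorem integral_cosine_sum_zero_two_pi (b : ℕ → ℝ) (n : ℕ) {N : ℕ} (hN : N ≠ 0) :
    ∫ x in (0 : ℝ)..2 * π, ∑ k ∈ range (n + 1), b k * cos (k * (N * x)) = 2 * π * b 0 := by
  have hcos (k : ℕ) : ∫ x in (0 : ℝ)..2 * π, cos ((k + 1 : ℕ) * (N * x)) = 0 := by
    simpa only [Nat.cast_mul, mul_assoc] using
      integral_cos_nat_mul_zero_two_pi (mul_ne_zero k.succ_ne_zero hN)
  rw [intervalIntegral.integral_finsetSum fun k _ =>
    (by fun_prop : Continuous _).intervalIntegrable _ _, sum_range_succ']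
  simp only [intervalIntegral.integral_const_mul, hcos, mul_zero, sum_const_zero, zero_add,
    Nat.cast_zero, zero_mul, cos_zero, mul_one, intervalIntegral.integral_const, sub_zero,
    smul_eq_mul]

noncomputable def cubeCosineCoeff (A B : ℝ) : ℕ → ℝ
  | 0 => 3 / 4 * A ^ 2 * B
  | 1 => 3 / 4 * A ^ 3 + 3 / 2 * A * B ^ 2
  | 2 => 3 / 2 * A ^ 2 * B + 3 / 4 * B ^ 3
  | 3 => 1 / 4 * A ^ 3 + 3 / 4 * A * B ^ 2
  | 4 => 3 / 4 * A ^ 2 * B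
  | 5 => 3 / 4 * A * B ^ 2
  | 6 => 1 / 4 * B ^ 3
  | _ => 0

theorem cos_add_cos_two_mul_cube (A B θ : ℝ) :
    (A * cos θ + B * cos (2 * θ)) ^ 3
      = ∑ k ∈ range 7, cubeCosineCoeff A B k * cos (k * θ) := by
  have h2 := cos_two_mul θ
  have h3 := cos_three_mul θ
  have h4 : cos (4 * θ) = 2 * cos (2 * θ) ^ 2 - 1 := by
    rw [← cos_two_mul]; ring_nf
  have h5 : cos (5 * θ) = 2 * cos (3 * θ) * cos (2 * θ) - cos θ := by
    have hsub := cos_sub (3 * θ) (2 * θ)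
    rw [show 3 * θ - 2 * θ = θ by ring] at hsub
    rw [show 5 * θ = 3 * θ + 2 * θ by ring, cos_add]
    linarith
  have h6 : cos (6 * θ) = 2 * cos (3 * θ) ^ 2 - 1 := by
    rw [← cos_two_mul]; ring_nf
  simp only [sum_range_succ, sum_range_zero, cubeCosineCoeff, Nat.cast_ofNat, Nat.cast_zero,
    Nat.cast_one, zero_mul, one_mul, cos_zero]
  rw [h6, h5, h4, h3, h2]
  ring

theorem mean_of_cubed_linear_solution_general (N : ℕ) (hN : 1 ≤ N) (s ε : ℝ)
    (v : ℝ → ℝ → ℝ)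
    (hv : ∀ t x, v t x = (N : ℝ) ^ (-s - ε) *
      (Real.exp (-t * (N : ℝ) ^ 2) * Real.cos ((N : ℝ) * x)
        + Real.exp (-t * (2 * (N : ℝ)) ^ 2) * Real.cos (2 * (N : ℝ) * x)))
    (t : ℝ) :
    (1 / (2 * π)) * ∫ x in (0 : ℝ)..(2 * π), (v t x) ^ 3
      = (3 / 4) * (N : ℝ) ^ (-3 * s - 3 * ε) * Real.exp (-6 * t * (N : ℝ) ^ 2) := by
  set A := (N : ℝ) ^ (-s - ε) * exp (-t * (N : ℝ) ^ 2)
  set B := (N : ℝ) ^ (-s - ε) * exp (-t * (2 * (N : ℝ)) ^ 2)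
  have hcube : (fun x => v t x ^ 3)
      = fun x => ∑ k ∈ range 7, cubeCosineCoeff A B k * cos (k * (N * x)) := by
    funext x
    rw [← cos_add_cos_two_mul_cube, hv, mul_assoc 2]
    ring
  have hA2B : A ^ 2 * B = (N : ℝ) ^ (-3 * s - 3 * ε) * exp (-6 * t * (N : ℝ) ^ 2) := by
    have hNpos : (0 : ℝ) < N := by exact_mod_cast hN
    rw [show -3 * s - 3 * ε = (-s - ε) + (-s - ε) + (-s - ε) by ring,
      rpow_add hNpos, rpow_add hNpos,
      show -6 * t * (N : ℝ) ^ 2 = -t * N ^ 2 + -t * N ^ 2 + -t * (2 * N) ^ 2 by ring,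
      exp_add, exp_add]
    ring
  rw [hcube, integral_cosine_sum_zero_two_pi _ 6 (by omega : N ≠ 0), mul_assoc (3 / 4), ← hA2B]
  simp only [cubeCosineCoeff]
  field_simp

/-- The spatial mean of the cube of the linear heat evolution
`v(t) = e^{tΔ}u₀` of `u₀(x) = N^{-s-ε}(cos(Nx) + cos(2Nx))` on the one-dimensional
torus, where `e^{tΔ}` multiplies the mode `cos(kx)` by `e^{-tk²}`. -/
theorem mean_of_cubed_linear_solution (N : ℕ) (hN : 1 ≤ N) (s ε : ℝ)
    (v : ℝ → ℝ → ℝ)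
    (hv : ∀ t x, v t x = (N : ℝ) ^ (-s - ε) *
      (Real.exp (-t * (N : ℝ) ^ 2) * Real.cos ((N : ℝ) * x)
        + Real.exp (-t * (2 * (N : ℝ)) ^ 2) * Real.cos (2 * (N : ℝ) * x)))
    (t : ℝ) (ht : 0 ≤ t) :
    (1 / (2 * π)) * ∫ x in (0 : ℝ)..(2 * π), (v t x) ^ 3
      = (3 / 4) * (N : ℝ) ^ (-3 * s - 3 * ε) * Real.exp (-6 * t * (N : ℝ) ^ 2) :=
  mean_of_cubed_linear_solution_general N hN s ε v hv t
end

section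
/- Let N ≥ 1 and u₀(x) = N^{-s-ε}(cos(Nx) + cos(2Nx)) on the one-dimensional torus. Then the spatial mean of the second Picard iterate Ξ₁(u₀)(t) = ∫₀ᵗ e^{(t-t')Δ}(e^{t'Δ}u₀)³ dt' equals (1/8) N^{-2-3s-3ε} (1 - e^{-6tN²}) for every t ≥ 0. -/
/-!
The heat flow keeps `u₀` in the span of `cos (N x)` and `cos (2 N x)`, with amplitudes
`a e^{-t'N²}` and `a e^{-4t'N²}`, `a = N^{-s-ε}`. Cubing produces the modes `cos (k N x)`,
`0 ≤ k ≤ 6`; only the constant one, `3 a³ e^{-6t'N²} / 4`, survives averaging over the torus,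
and the outer heat flow leaves it fixed. Integrating it over `t' ∈ [0, t]` gives the claim.
-/

open Real

theorem IsLinearMap.apply_sum_mul_cos {H : (ℝ → ℝ) → ℝ → ℝ} (hH : IsLinearMap ℝ H)
    {μ : ℤ → ℝ} (hcos : ∀ k : ℤ, H (fun x => cos (k * x)) = fun x => μ k * cos (k * x))
    {ι : Type*} (s : Finset ι) (c : ι → ℝ) (m : ι → ℤ) :
    H (fun x => ∑ i ∈ s, c i * cos (m i * x))
      = fun x => ∑ i ∈ s, c i * μ (m i) * cos (m i * x) := by
  have hsum : (fun x => ∑ i ∈ s, c i * cos (m i * x))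
      = ∑ i ∈ s, c i • fun x => cos (m i * x) := by
    ext x; simp [Finset.sum_apply]
  rw [hsum, ← IsLinearMap.mk'_apply hH, map_sum]
  ext x
  simp [Finset.sum_apply, IsLinearMap.mk'_apply, hcos, mul_assoc]

theorem IsLinearMap.apply_mul_cos_add_mul_cos {H : (ℝ → ℝ) → ℝ → ℝ} (hH : IsLinearMap ℝ H)
    {μ : ℤ → ℝ} (hcos : ∀ k : ℤ, H (fun x => cos (k * x)) = fun x => μ k * cos (k * x))
    (a b : ℝ) (k l : ℤ) :
    H (fun x => a * cos (k * x) + b * cos (l * x))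
      = fun x => a * μ k * cos (k * x) + b * μ l * cos (l * x) := by
  simpa using hH.apply_sum_mul_cos hcos Finset.univ ![a, b] ![k, l]

theorem integral_cos_int_mul (k : ℤ) :
    ∫ x in (0 : ℝ)..2 * π, cos (k * x) = if k = 0 then 2 * π else 0 := by
  split_ifs with hk
  · simp [hk]
  · have hk' : (k : ℝ) ≠ 0 := Int.cast_ne_zero.mpr hk
    rw [intervalIntegral.integral_comp_mul_left cos hk', integral_cos,
      show (k : ℝ) * (2 * π) = ((2 * k : ℤ) : ℝ) * π by push_cast; ring, sin_int_mul_pi]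
    simp

theorem integral_integral_sum_mul_cos {ι : Type*} (s : Finset ι) {g : ι → ℝ → ℝ} {t : ℝ}
    (hg : ∀ i ∈ s, IntervalIntegrable (g i) MeasureTheory.volume 0 t) (m : ι → ℤ) :
    ∫ x in (0 : ℝ)..2 * π, ∫ τ in (0 : ℝ)..t, ∑ i ∈ s, g i τ * cos (m i * x)
      = 2 * π * ∑ i ∈ s, if m i = 0 then ∫ τ in (0 : ℝ)..t, g i τ else 0 := by
  have hinner : ∀ x, ∫ τ in (0 : ℝ)..t, ∑ i ∈ s, g i τ * cos (m i * x)
      = ∑ i ∈ s, (∫ τ in (0 : ℝ)..t, g i τ) * cos (m i * x) := fun x => by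
    rw [intervalIntegral.integral_finsetSum fun i hi => (hg i hi).mul_const _]
    simp only [intervalIntegral.integral_mul_const]
  simp_rw [hinner]
  rw [intervalIntegral.integral_finsetSum fun i _ => by
    apply Continuous.intervalIntegrable; fun_prop]
  simp only [intervalIntegral.integral_const_mul, integral_cos_int_mul, Finset.mul_sum]
  refine Finset.sum_congr rfl fun i _ => ?_
  split_ifs <;> ring

theorem integral_exp_neg_mul {c : ℝ} (hc : c ≠ 0) (t : ℝ) :
    ∫ τ in (0 : ℝ)..t, exp (-(c * τ)) = (1 - exp (-(c * t))) / c := by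
  rw [intervalIntegral.integral_comp_mul_left (fun x => exp (-x)) hc,
    intervalIntegral.integral_comp_neg, integral_exp]
  simp [div_eq_inv_mul]

noncomputable def cubeCoeff (a b : ℝ) : Fin 7 → ℝ :=
  ![3 * a ^ 2 * b / 4, 3 * a ^ 3 / 4 + 3 * a * b ^ 2 / 2, 3 * a ^ 2 * b / 2 + 3 * b ^ 3 / 4,
    a ^ 3 / 4 + 3 * a * b ^ 2 / 4, 3 * a ^ 2 * b / 4, 3 * a * b ^ 2 / 4, b ^ 3 / 4]

@[fun_prop]
theorem Continuous.cubeCoeff {α : Type*} [TopologicalSpace α] {f g : α → ℝ} (hf : Continuous f)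
    (hg : Continuous g) (k : Fin 7) : Continuous fun x => cubeCoeff (f x) (g x) k := by
  fin_cases k <;> simp only [_root_.cubeCoeff, Fin.zero_eta, Fin.mk_one, Fin.reduceFinMk, Fin.isValue,
    Matrix.cons_val_zero, Matrix.cons_val_one, Matrix.cons_val] <;> fun_prop

theorem cos_add_two_mul_mul (x θ : ℝ) :
    cos ((x + 2) * θ) = 2 * cos ((x + 1) * θ) * cos θ - cos (x * θ) := by
  rw [two_mul_cos_mul_cos]; ring_nf

theorem mul_cos_add_mul_cos_two_mul_pow_three (a b θ : ℝ) :
    (a * cos θ + b * cos (2 * θ)) ^ 3 = ∑ k : Fin 7, cubeCoeff a b k * cos (k * θ) := by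
  have h4 := cos_add_two_mul_mul 2 θ
  have h5 := cos_add_two_mul_mul 3 θ
  have h6 := cos_add_two_mul_mul 4 θ
  norm_num only at h4 h5 h6
  simp only [cubeCoeff, Fin.sum_univ_seven, Fin.isValue, Matrix.cons_val_zero, Fin.coe_ofNat_eq_mod,
    Nat.zero_mod, CharP.cast_eq_zero, zero_mul, cos_zero, mul_one, Matrix.cons_val_one, Nat.one_mod,
    Nat.cast_one, one_mul, Matrix.cons_val, Nat.reduceMod, Nat.cast_ofNat, Nat.mod_succ]
  rw [h6, h5, h4, cos_three_mul, cos_two_mul]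
  ring

theorem heat_pow_three_heat_mul_cos_add_cos_two_mul {H : ℝ → (ℝ → ℝ) → ℝ → ℝ}
    (hH_lin : ∀ τ, IsLinearMap ℝ (H τ))
    (hH_cos : ∀ (τ : ℝ) (k : ℤ),
      H τ (fun x => cos (k * x)) = fun x => exp (-τ * k ^ 2) * cos (k * x))
    (a : ℝ) (n : ℤ) (τ σ : ℝ) :
    H σ (fun y => H τ (fun x => a * (cos (n * x) + cos (2 * n * x))) y ^ 3)
      = fun x => ∑ k : Fin 7,
          cubeCoeff (a * exp (-τ * n ^ 2)) (a * exp (-τ * (2 * n) ^ 2)) k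
            * exp (-σ * ((k : ℕ) * n : ℤ) ^ 2) * cos (((k : ℕ) * n : ℤ) * x) := by
  have hflow := (hH_lin τ).apply_mul_cos_add_mul_cos (μ := fun k => exp (-τ * k ^ 2)) (hH_cos τ)
    a a n (2 * n)
  push_cast at hflow
  have hcube : (fun y => H τ (fun x => a * (cos (n * x) + cos (2 * n * x))) y ^ 3)
      = fun y => ∑ k : Fin 7, cubeCoeff (a * exp (-τ * n ^ 2)) (a * exp (-τ * (2 * n) ^ 2)) k
          * cos (((k : ℕ) * n : ℤ) * y) := by
    ext y
    simp only [mul_add, hflow]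
    rw [mul_assoc 2, mul_cos_add_mul_cos_two_mul_pow_three]
    push_cast
    simp only [mul_assoc]
  rw [hcube, (hH_lin σ).apply_sum_mul_cos (μ := fun k => exp (-σ * k ^ 2)) (hH_cos σ)]

theorem integral_cubeCoeff_zero_heat {n : ℤ} (hn : n ≠ 0) (a t : ℝ) :
    ∫ τ in (0 : ℝ)..t, cubeCoeff (a * exp (-τ * n ^ 2)) (a * exp (-τ * (2 * n) ^ 2)) 0
      = a ^ 3 * (1 - exp (-6 * t * n ^ 2)) / (8 * n ^ 2) := by
  have hconst (τ : ℝ) : cubeCoeff (a * exp (-τ * n ^ 2)) (a * exp (-τ * (2 * n) ^ 2)) 0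
      = 3 / 4 * a ^ 3 * exp (-(6 * n ^ 2 * τ)) := by
    have hexp : exp (-τ * n ^ 2) ^ 2 * exp (-τ * (2 * n) ^ 2) = exp (-(6 * n ^ 2 * τ)) := by
      rw [sq, ← exp_add, ← exp_add]; ring_nf
    simp only [cubeCoeff, Matrix.cons_val_zero]
    linear_combination 3 / 4 * a ^ 3 * hexp
  have hn' : (n : ℝ) ≠ 0 := Int.cast_ne_zero.mpr hn
  simp only [hconst]
  rw [intervalIntegral.integral_const_mul, integral_exp_neg_mul (by positivity) t]
  field_simp
  ring_nf

theorem mean_of_second_picard_iterate_general (N : ℕ) (hN : 1 ≤ N) (s ε : ℝ)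
    (H : ℝ → (ℝ → ℝ) → (ℝ → ℝ))
    (hH_lin : ∀ τ : ℝ, IsLinearMap ℝ (H τ))
    (hH_cos : ∀ (τ : ℝ) (k : ℤ),
      H τ (fun x => Real.cos ((k : ℝ) * x))
        = fun x => Real.exp (-τ * (k : ℝ) ^ 2) * Real.cos ((k : ℝ) * x))
    (u₀ : ℝ → ℝ)
    (hu₀ : u₀ = fun x => (N : ℝ) ^ (-s - ε) *
      (Real.cos ((N : ℝ) * x) + Real.cos (2 * (N : ℝ) * x)))
    (Ξ₁ : ℝ → ℝ → ℝ)
    (hΞ₁ : ∀ t x, Ξ₁ t x = ∫ t' in (0 : ℝ)..t, H (t - t') (fun y => (H t' u₀ y) ^ 3) x)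
    (t : ℝ) :
    (1 / (2 * π)) * ∫ x in (0 : ℝ)..(2 * π), Ξ₁ t x
      = (1 / 8) * (N : ℝ) ^ (-2 - 3 * s - 3 * ε) * (1 - Real.exp (-6 * t * (N : ℝ) ^ 2)) := by
  set a := (N : ℝ) ^ (-s - ε)
  have hN0 : N ≠ 0 := by omega
  rw [show u₀ = fun x => a * (cos (((N : ℤ) : ℝ) * x) + cos (2 * ((N : ℤ) : ℝ) * x)) by
    simpa only [Int.cast_natCast] using hu₀] at hΞ₁
  simp only [hΞ₁, heat_pow_three_heat_mul_cos_add_cos_two_mul hH_lin hH_cos]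
  rw [integral_integral_sum_mul_cos _ fun k _ => ?integrable,
    Finset.sum_eq_single 0 (fun k _ hk => if_neg (by simpa [hN0] using hk)) (by simp)]
  simp only [Fin.val_zero, Nat.cast_zero, zero_mul, Int.cast_zero, ne_eq, OfNat.ofNat_ne_zero,
    not_false_eq_true, zero_pow, mul_zero, exp_zero, mul_one, if_true,
    integral_cubeCoeff_zero_heat (Int.natCast_ne_zero.mpr hN0)]
  have hpow : (N : ℝ) ^ (-2 - 3 * s - 3 * ε) * N ^ 2 = a ^ 3 := by
    rw [← rpow_natCast, ← rpow_natCast, ← rpow_add (by positivity), ← rpow_mul (by positivity)]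
    congr 1; push_cast; ring
  field_simp
  rw [← hpow]
  push_cast
  ring
  case integrable =>
    exact Continuous.intervalIntegrable (by fun_prop) _ _

/-- The spatial mean of the second Picard iterate
`Ξ₁(u₀)(t) = ∫₀ᵗ e^{(t-t')Δ}(e^{t'Δ}u₀)³ dt'` on the one-dimensional torus, for
`u₀(x) = N^{-s-ε}(cos(Nx) + cos(2Nx))`, where the heat semigroup `H τ = e^{τΔ}` is
encoded as a linear operator multiplying the mode `cos(kx)` by `e^{-τk²}`. -/
theorem mean_of_second_picard_iterate (N : ℕ) (hN : 1 ≤ N) (s ε : ℝ)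
    (H : ℝ → (ℝ → ℝ) → (ℝ → ℝ))
    (hH_lin : ∀ τ : ℝ, IsLinearMap ℝ (H τ))
    (hH_cos : ∀ (τ : ℝ) (k : ℤ),
      H τ (fun x => Real.cos ((k : ℝ) * x))
        = fun x => Real.exp (-τ * (k : ℝ) ^ 2) * Real.cos ((k : ℝ) * x))
    (u₀ : ℝ → ℝ)
    (hu₀ : u₀ = fun x => (N : ℝ) ^ (-s - ε) *
      (Real.cos ((N : ℝ) * x) + Real.cos (2 * (N : ℝ) * x)))
    (Ξ₁ : ℝ → ℝ → ℝ)
    (hΞ₁ : ∀ t x, Ξ₁ t x = ∫ t' in (0 : ℝ)..t, H (t - t') (fun y => (H t' u₀ y) ^ 3) x)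
    (t : ℝ) (ht : 0 ≤ t) :
    (1 / (2 * π)) * ∫ x in (0 : ℝ)..(2 * π), Ξ₁ t x
      = (1 / 8) * (N : ℝ) ^ (-2 - 3 * s - 3 * ε) * (1 - Real.exp (-6 * t * (N : ℝ) ^ 2)) :=
  mean_of_second_picard_iterate_general N hN s ε H hH_lin hH_cos u₀ hu₀ Ξ₁ hΞ₁ t
end
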